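/- Let G be an unmixed bipartite graph on V_n = {x_1,...,x_n} ∪ {y_1,...,y_n} with induced K_{m,m} (m ≥ 2) on {x_1,...,x_m} ∪ {y_1,...,y_m}, and let H be the induced subgraph on V_n \ ({x_1,...,x_{m-1}} ∪ {y_1,...,y_{m-1}}). Then the map sending a minimal vertex cover C of H to C ∪ {x_1,...,x_m} if x_m ∈ C, and to C ∪ {y_1,...,y_m} if x_m ∉ C, is a bijection from the set of minimal vertex covers of H onto the set of minimal vertex covers of G. -/
import Mathlib


open scoped Classical

def IsCover (n : ℕ) (E : Fin n → Fin n → Prop) (C : Set (Fin n ⊕ Fin n)) : Prop :=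
  ∀ i j, E i j → Sum.inl i ∈ C ∨ Sum.inr j ∈ C

def IsMinCover (n : ℕ) (E : Fin n → Fin n → Prop) (C : Set (Fin n ⊕ Fin n)) : Prop :=
  IsCover n E C ∧ ∀ D ⊂ C, ¬ IsCover n E D

/-- the map `C ↦ C ∪ {x_1,…,x_m}` (if `x_m ∈ C`) resp. `C ↦ C ∪ {y_1,…,y_m}`
(if `x_m ∉ C`) is a bijection from the minimal vertex covers of `H` onto those of `G`. -/
theorem stmt6 (n m : ℕ) (hm : 2 ≤ m) (hn : m ≤ n) (E : Fin n → Fin n → Prop)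
    (hrefl : ∀ i, E i i)
    (htrans : ∀ i j k : Fin n, i ≠ j → j ≠ k → i ≠ k → E i j → E j k → E i k)
    (hone : ∀ C, IsMinCover n E C → ∀ i, (Sum.inl i ∈ C ↔ Sum.inr i ∉ C))
    (hcard : ∀ C, IsMinCover n E C → C.ncard = n)
    (hK : ∀ i j : Fin n, i.val < m → j.val < m → E i j) :
    Set.BijOn
      (fun C : Set (Fin n ⊕ Fin n) =>
        if Sum.inl (⟨m - 1, by omega⟩ : Fin n) ∈ C then
          C ∪ Sum.inl '' {i : Fin n | i.val < m}
        else
          C ∪ Sum.inr '' {i : Fin n | i.val < m})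
      {C | IsMinCover n (fun i j => E i j ∧ m - 1 ≤ i.val ∧ m - 1 ≤ j.val) C ∧
            ∀ v ∈ C, m - 1 ≤ Sum.elim Fin.val Fin.val v}
      {C | IsMinCover n E C} := by
  classical
  have hn0 : 0 < n := by omega
  set X : Set (Fin n ⊕ Fin n) := Sum.inl '' {i : Fin n | i.val < m} with hX
  set Y : Set (Fin n ⊕ Fin n) := Sum.inr '' {i : Fin n | i.val < m} with hY
  set EH : Fin n → Fin n → Prop := fun i j => E i j ∧ m - 1 ≤ i.val ∧ m - 1 ≤ j.val with hEH
  set p : Fin n := ⟨m - 1, by omega⟩ with hp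
  have hpv : p.val = m - 1 := rfl
  have hXl : ∀ i : Fin n, Sum.inl i ∈ X ↔ i.val < m := by intro i; simp [hX]
  have hXr : ∀ i : Fin n, Sum.inr i ∉ X := by intro i; simp [hX]
  have hYr : ∀ i : Fin n, Sum.inr i ∈ Y ↔ i.val < m := by intro i; simp [hY]
  have hYl : ∀ i : Fin n, Sum.inl i ∉ Y := by intro i; simp [hY]
  have hEH' : ∀ i j, EH i j ↔ (E i j ∧ m - 1 ≤ i.val ∧ m - 1 ≤ j.val) := by
    intro i j; rw [hEH]
  have hmono : ∀ (F : Fin n → Fin n → Prop) (A B : Set (Fin n ⊕ Fin n)), A ⊆ B →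
      IsCover n F A → IsCover n F B := by
    intro F A B hAB hA i j hij
    rcases hA i j hij with h | h
    · exact Or.inl (hAB h)
    · exact Or.inr (hAB h)
  have hminD : ∀ (F : Fin n → Fin n → Prop) (C : Set (Fin n ⊕ Fin n)), IsMinCover n F C →
      ∀ v ∈ C, ¬ IsCover n F (C \ {v}) := by
    intro F C hC v hv
    exact hC.2 _ (Set.sdiff_singleton_ssubset.mpr hv)
  have hminI : ∀ (F : Fin n → Fin n → Prop) (C : Set (Fin n ⊕ Fin n)),
      IsCover n F C → (∀ v ∈ C, ¬ IsCover n F (C \ {v})) → IsMinCover n F C := by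
    intro F C hC hmm'
    refine ⟨hC, fun D hD hDc => ?_⟩
    obtain ⟨v, hvC, hvD⟩ := Set.exists_of_ssubset hD
    exact hmm' v hvC (hmono F D _ (fun w hw => ⟨hD.1 hw, by rintro rfl; exact hvD hw⟩) hDc)
  have htp : ∀ i j : Fin n, m ≤ i.val → j.val < m - 1 → E i j → E i p := by
    intro i j hi hj hij
    exact htrans i j p (Fin.ne_of_val_ne (by omega)) (Fin.ne_of_val_ne (by omega))
      (Fin.ne_of_val_ne (by omega)) hij (hK j p (by omega) (by omega))
  have hpt : ∀ i j : Fin n, i.val < m - 1 → m ≤ j.val → E i j → E p j := by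
    intro i j hi hj hij
    exact htrans p i j (Fin.ne_of_val_ne (by omega)) (Fin.ne_of_val_ne (by omega))
      (Fin.ne_of_val_ne (by omega)) (hK p i (by omega) (by omega)) hij
  -- every minimal H-cover contains exactly one of x_p, y_p
  have hB : ∀ C : Set (Fin n ⊕ Fin n), IsMinCover n EH C →
      (Sum.inl p ∈ C ∧ Sum.inr p ∉ C) ∨ (Sum.inl p ∉ C ∧ Sum.inr p ∈ C) := by
    intro C hC
    have hpp : Sum.inl p ∈ C ∨ Sum.inr p ∈ C :=
      hC.1 p p ((hEH' p p).mpr ⟨hrefl p, by omega, by omega⟩)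
    by_cases h1 : Sum.inl p ∈ C
    · left
      refine ⟨h1, fun h2 => ?_⟩
      have hA := hminD EH C hC _ h1
      have hA' := hminD EH C hC _ h2
      rw [IsCover] at hA hA'
      push_neg at hA hA'
      obtain ⟨a1, b, hab1, hx1, hy1⟩ := hA
      obtain ⟨a, b2, hab2, hx2, hy2⟩ := hA'
      have hbC : Sum.inr b ∉ C := fun h => hy1 ⟨h, by simp⟩
      have haC : Sum.inl a ∉ C := fun h => hx2 ⟨h, by simp⟩
      have ha1 : a1 = p := by
        by_contra hne
        rcases hC.1 a1 b hab1 with h | h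
        · exact hx1 ⟨h, fun he => hne (Sum.inl.inj he)⟩
        · exact hbC h
      have hb2 : b2 = p := by
        by_contra hne
        rcases hC.1 a b2 hab2 with h | h
        · exact haC h
        · exact hy2 ⟨h, fun he => hne (Sum.inr.inj he)⟩
      subst ha1
      subst hb2
      obtain ⟨hEpb, _, hbv⟩ := (hEH' p b).mp hab1
      obtain ⟨hEap, hav, _⟩ := (hEH' a p).mp hab2
      have hbp : b ≠ p := fun he => hbC (he ▸ h2)
      have hap : a ≠ p := fun he => haC (he ▸ h1)
      have hEab : E a b := by
        by_cases hab : a = b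
        · subst hab; exact hrefl a
        · exact htrans a p b hap (Ne.symm hbp) hab hEap hEpb
      rcases hC.1 a b ((hEH' a b).mpr ⟨hEab, hav, hbv⟩) with h | h
      · exact haC h
      · exact hbC h
    · right
      exact ⟨h1, hpp.resolve_left h1⟩
  -- forward map correctness, x-branch
  have fwd1 : ∀ C : Set (Fin n ⊕ Fin n), IsMinCover n EH C →
      (∀ v ∈ C, m - 1 ≤ Sum.elim Fin.val Fin.val v) → Sum.inl p ∈ C →
      IsMinCover n E (C ∪ X) := by
    intro C hC hsupp hpC
    have hnrp : Sum.inr p ∉ C := by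
      rcases hB C hC with h | h
      · exact h.2
      · exact absurd hpC h.1
    have hcov : IsCover n E (C ∪ X) := by
      intro i j hij
      by_cases hi : i.val < m
      · exact Or.inl (Or.inr ((hXl i).mpr hi))
      · push_neg at hi
        by_cases hj : m - 1 ≤ j.val
        · rcases hC.1 i j ((hEH' i j).mpr ⟨hij, by omega, hj⟩) with h | h
          · exact Or.inl (Or.inl h)
          · exact Or.inr (Or.inl h)
        · push_neg at hj
          have hEip : E i p := htp i j (by omega) (by omega) hij
          rcases hC.1 i p ((hEH' i p).mpr ⟨hEip, by omega, by omega⟩) with h | h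
          · exact Or.inl (Or.inl h)
          · exact absurd h hnrp
    refine hminI E _ hcov ?_
    intro v hv hcov'
    by_cases hvX : v ∈ X
    · rw [hX] at hvX
      obtain ⟨i, hi, rfl⟩ := hvX
      rcases hcov' i p (hK i p hi (by omega)) with h | h
      · exact h.2 rfl
      · rcases h.1 with h' | h'
        · exact hnrp h'
        · exact hXr p h'
    · have hvC : v ∈ C := hv.resolve_right hvX
      have hnc := hminD EH C hC v hvC
      rw [IsCover] at hnc
      push_neg at hnc
      obtain ⟨a, b, hab, h1, h2⟩ := hnc
      obtain ⟨hEab, hav, hbv⟩ := (hEH' a b).mp hab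
      rcases hcov' a b hEab with h | h
      · rcases h.1 with h' | h'
        · exact h1 ⟨h', h.2⟩
        · rw [hX] at h'
          obtain ⟨q, hq, hqe⟩ := h'
          have hq' : q.val < m := hq
          have heqa : q = a := Sum.inl.inj hqe
          have hav' : a.val < m := heqa ▸ hq'
          have hap : a = p := Fin.ext (by omega)
          subst hap
          exact h1 ⟨hpC, h.2⟩
      · rcases h.1 with h' | h'
        · exact h2 ⟨h', h.2⟩
        · exact hXr b h'
  -- forward map correctness, y-branch
  have fwd2 : ∀ C : Set (Fin n ⊕ Fin n), IsMinCover n EH C →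
      (∀ v ∈ C, m - 1 ≤ Sum.elim Fin.val Fin.val v) → Sum.inl p ∉ C →
      IsMinCover n E (C ∪ Y) := by
    intro C hC hsupp hpC
    have hrp : Sum.inr p ∈ C := by
      rcases hB C hC with h | h
      · exact absurd h.1 hpC
      · exact h.2
    have hcov : IsCover n E (C ∪ Y) := by
      intro i j hij
      by_cases hj : j.val < m
      · exact Or.inr (Or.inr ((hYr j).mpr hj))
      · push_neg at hj
        by_cases hi : m - 1 ≤ i.val
        · rcases hC.1 i j ((hEH' i j).mpr ⟨hij, hi, by omega⟩) with h | h
          · exact Or.inl (Or.inl h)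
          · exact Or.inr (Or.inl h)
        · push_neg at hi
          have hEpj : E p j := hpt i j (by omega) (by omega) hij
          rcases hC.1 p j ((hEH' p j).mpr ⟨hEpj, by omega, by omega⟩) with h | h
          · exact absurd h hpC
          · exact Or.inr (Or.inl h)
    refine hminI E _ hcov ?_
    intro v hv hcov'
    by_cases hvY : v ∈ Y
    · rw [hY] at hvY
      obtain ⟨j, hj, rfl⟩ := hvY
      rcases hcov' p j (hK p j (by omega) hj) with h | h
      · rcases h.1 with h' | h'
        · exact hpC h'
        · exact hYl p h'
      · exact h.2 rfl
    · have hvC : v ∈ C := hv.resolve_right hvY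
      have hnc := hminD EH C hC v hvC
      rw [IsCover] at hnc
      push_neg at hnc
      obtain ⟨a, b, hab, h1, h2⟩ := hnc
      obtain ⟨hEab, hav, hbv⟩ := (hEH' a b).mp hab
      rcases hcov' a b hEab with h | h
      · rcases h.1 with h' | h'
        · exact h1 ⟨h', h.2⟩
        · exact hYl a h'
      · rcases h.1 with h' | h'
        · exact h2 ⟨h', h.2⟩
        · rw [hY] at h'
          obtain ⟨q, hq, hqe⟩ := h'
          have hq' : q.val < m := hq
          have heqb : q = b := Sum.inr.inj hqe
          have hbv' : b.val < m := heqb ▸ hq'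
          have hbp : b = p := Fin.ext (by omega)
          subst hbp
          exact h2 ⟨hrp, h.2⟩
  -- reconstruction lemmas for injectivity
  have recX : ∀ C : Set (Fin n ⊕ Fin n), (∀ v ∈ C, m - 1 ≤ Sum.elim Fin.val Fin.val v) →
      Sum.inl p ∈ C → C = ((C ∪ X) \ X) ∪ {Sum.inl p} := by
    intro C hsupp hpC
    ext v
    constructor
    · intro hv
      by_cases hvX : v ∈ X
      · rw [hX] at hvX
        obtain ⟨i, hi, rfl⟩ := hvX
        have hi' : i.val < m := hi
        have h5 : m - 1 ≤ i.val := hsupp _ hv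
        have hip : i = p := Fin.ext (by omega)
        right
        rw [hip]
        rfl
      · exact Or.inl ⟨Or.inl hv, hvX⟩
    · rintro (⟨hv, hvX⟩ | hv)
      · rcases hv with h | h
        · exact h
        · exact absurd h hvX
      · rw [Set.mem_singleton_iff] at hv
        subst hv
        exact hpC
  have recY : ∀ C : Set (Fin n ⊕ Fin n), (∀ v ∈ C, m - 1 ≤ Sum.elim Fin.val Fin.val v) →
      Sum.inr p ∈ C → C = ((C ∪ Y) \ Y) ∪ {Sum.inr p} := by
    intro C hsupp hpC
    ext v
    constructor
    · intro hv
      by_cases hvY : v ∈ Y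
      · rw [hY] at hvY
        obtain ⟨j, hj, rfl⟩ := hvY
        have hj' : j.val < m := hj
        have h5 : m - 1 ≤ j.val := hsupp _ hv
        have hjp : j = p := Fin.ext (by omega)
        right
        rw [hjp]
        rfl
      · exact Or.inl ⟨Or.inl hv, hvY⟩
    · rintro (⟨hv, hvY⟩ | hv)
      · rcases hv with h | h
        · exact h
        · exact absurd h hvY
      · rw [Set.mem_singleton_iff] at hv
        subst hv
        exact hpC
  refine ⟨?_, ?_, ?_⟩
  · -- MapsTo
    rintro C ⟨hC, hsupp⟩
    simp only [Set.mem_setOf_eq]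
    split_ifs with h
    · exact fwd1 C hC hsupp h
    · exact fwd2 C hC hsupp h
  · -- InjOn
    rintro C ⟨hC, hsupp⟩ C' ⟨hC', hsupp'⟩ heq
    simp only [] at heq
    by_cases h1 : Sum.inl p ∈ C <;> by_cases h2 : Sum.inl p ∈ C'
    · rw [if_pos h1, if_pos h2] at heq
      conv_lhs => rw [recX C hsupp h1]
      rw [heq]
      exact (recX C' hsupp' h2).symm
    · rw [if_pos h1, if_neg h2] at heq
      exfalso
      have hz0 : (0 : ℕ) < m := by omega
      have hz : Sum.inl (⟨0, hn0⟩ : Fin n) ∈ C' ∪ Y := by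
        rw [← heq]
        exact Or.inr ((hXl ⟨0, hn0⟩).mpr hz0)
      rcases hz with h | h
      · have h5 : m - 1 ≤ (0 : ℕ) := hsupp' _ h
        omega
      · exact hYl _ h
    · rw [if_neg h1, if_pos h2] at heq
      exfalso
      have hz0 : (0 : ℕ) < m := by omega
      have hz : Sum.inr (⟨0, hn0⟩ : Fin n) ∈ C' ∪ X := by
        rw [← heq]
        exact Or.inr ((hYr ⟨0, hn0⟩).mpr hz0)
      rcases hz with h | h
      · have h5 : m - 1 ≤ (0 : ℕ) := hsupp' _ h
        omega
      · exact hXr _ h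
    · rw [if_neg h1, if_neg h2] at heq
      have hc1 : Sum.inr p ∈ C := ((hB C hC).resolve_left (fun h => h1 h.1)).2
      have hc2 : Sum.inr p ∈ C' := ((hB C' hC').resolve_left (fun h => h2 h.1)).2
      conv_lhs => rw [recY C hsupp hc1]
      rw [heq]
      exact (recY C' hsupp' hc2).symm
  · -- SurjOn
    intro D hD
    simp only [Set.mem_setOf_eq] at hD
    by_cases hpD : Sum.inl p ∈ D
    · have hnrpD : Sum.inr p ∉ D := (hone D hD p).mp hpD
      have hXD : ∀ i : Fin n, i.val < m → Sum.inl i ∈ D := by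
        intro i hi
        rcases hD.1 i p (hK i p hi (by omega)) with h | h
        · exact h
        · exact absurd h hnrpD
      have hnrD : ∀ j : Fin n, j.val < m → Sum.inr j ∉ D := by
        intro j hj
        exact (hone D hD j).mp (hXD j hj)
      set C : Set (Fin n ⊕ Fin n) := (D \ X) ∪ {Sum.inl p} with hCdef
      have hCsub : C ⊆ D := by
        rintro w (h | h)
        · exact h.1
        · rw [Set.mem_singleton_iff] at h
          subst h
          exact hpD
      have hCcov : IsCover n EH C := by
        intro i j hij
        obtain ⟨hij', hi, hj⟩ := (hEH' i j).mp hij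
        rcases hD.1 i j hij' with h | h
        · by_cases hip : i = p
          · subst hip
            exact Or.inl (Or.inr rfl)
          · have hge : ¬ i.val < m := fun hlt => hip (Fin.ext (by omega))
            exact Or.inl (Or.inl ⟨h, fun hx => hge ((hXl i).mp hx)⟩)
        · exact Or.inr (Or.inl ⟨h, hXr j⟩)
      have hCmin : IsMinCover n EH C := by
        refine hminI EH C hCcov ?_
        intro v hv hcovv
        rcases hv with hv | hv
        · refine hminD E D hD v hv.1 ?_
          intro i j hij
          by_cases hi : i.val < m
          · refine Or.inl ⟨hXD i hi, ?_⟩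
            intro he
            rw [Set.mem_singleton_iff] at he
            subst he
            exact hv.2 ((hXl i).mpr hi)
          · push_neg at hi
            by_cases hj : m - 1 ≤ j.val
            · rcases hcovv i j ((hEH' i j).mpr ⟨hij, by omega, hj⟩) with h | h
              · exact Or.inl ⟨hCsub h.1, h.2⟩
              · exact Or.inr ⟨hCsub h.1, h.2⟩
            · push_neg at hj
              have hEip : E i p := htp i j (by omega) (by omega) hij
              rcases hcovv i p ((hEH' i p).mpr ⟨hEip, by omega, by omega⟩) with h | h
              · exact Or.inl ⟨hCsub h.1, h.2⟩
              · exact absurd (hCsub h.1) hnrpD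
        · rw [Set.mem_singleton_iff] at hv
          subst hv
          rcases hcovv p p ((hEH' p p).mpr ⟨hrefl p, by omega, by omega⟩) with h | h
          · exact h.2 rfl
          · exact hnrpD (hCsub h.1)
      have hCsupp : ∀ v ∈ C, m - 1 ≤ Sum.elim Fin.val Fin.val v := by
        rintro v (hv | hv)
        · rcases v with i | j
          · have h5 : ¬ i.val < m := fun h => hv.2 ((hXl i).mpr h)
            show m - 1 ≤ i.val
            omega
          · show m - 1 ≤ j.val
            by_contra h5
            exact hnrD j (by omega) hv.1
        · rw [Set.mem_singleton_iff] at hv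
          subst hv
          show m - 1 ≤ p.val
          omega
      refine ⟨C, ⟨hCmin, hCsupp⟩, ?_⟩
      have hpc : Sum.inl p ∈ C := Or.inr rfl
      simp only []
      rw [if_pos hpc]
      ext w
      constructor
      · rintro (hw | hw)
        · exact hCsub hw
        · rw [hX] at hw
          obtain ⟨i, hi, rfl⟩ := hw
          exact hXD i hi
      · intro hw
        by_cases hwX : w ∈ X
        · exact Or.inr hwX
        · exact Or.inl (Or.inl ⟨hw, hwX⟩)
    · have hrpD : Sum.inr p ∈ D := by
        by_contra h
        exact hpD ((hone D hD p).mpr h)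
      have hYD : ∀ j : Fin n, j.val < m → Sum.inr j ∈ D := by
        intro j hj
        exact (hD.1 p j (hK p j (by omega) hj)).resolve_left hpD
      have hnlD : ∀ i : Fin n, i.val < m → Sum.inl i ∉ D := by
        intro i hi h
        exact (hone D hD i).mp h (hYD i hi)
      set C : Set (Fin n ⊕ Fin n) := (D \ Y) ∪ {Sum.inr p} with hCdef
      have hCsub : C ⊆ D := by
        rintro w (h | h)
        · exact h.1
        · rw [Set.mem_singleton_iff] at h
          subst h
          exact hrpD
      have hCcov : IsCover n EH C := by
        intro i j hij
        obtain ⟨hij', hi, hj⟩ := (hEH' i j).mp hij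
        rcases hD.1 i j hij' with h | h
        · exact Or.inl (Or.inl ⟨h, hYl i⟩)
        · by_cases hjp : j = p
          · subst hjp
            exact Or.inr (Or.inr rfl)
          · have hge : ¬ j.val < m := fun hlt => hjp (Fin.ext (by omega))
            exact Or.inr (Or.inl ⟨h, fun hy => hge ((hYr j).mp hy)⟩)
      have hCmin : IsMinCover n EH C := by
        refine hminI EH C hCcov ?_
        intro v hv hcovv
        rcases hv with hv | hv
        · refine hminD E D hD v hv.1 ?_
          intro i j hij
          by_cases hj : j.val < m
          · refine Or.inr ⟨hYD j hj, ?_⟩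
            intro he
            rw [Set.mem_singleton_iff] at he
            subst he
            exact hv.2 ((hYr j).mpr hj)
          · push_neg at hj
            by_cases hi : m - 1 ≤ i.val
            · rcases hcovv i j ((hEH' i j).mpr ⟨hij, hi, by omega⟩) with h | h
              · exact Or.inl ⟨hCsub h.1, h.2⟩
              · exact Or.inr ⟨hCsub h.1, h.2⟩
            · push_neg at hi
              have hEpj : E p j := hpt i j (by omega) (by omega) hij
              rcases hcovv p j ((hEH' p j).mpr ⟨hEpj, by omega, by omega⟩) with h | h
              · exact absurd (hCsub h.1) hpD
              · exact Or.inr ⟨hCsub h.1, h.2⟩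
        · rw [Set.mem_singleton_iff] at hv
          subst hv
          rcases hcovv p p ((hEH' p p).mpr ⟨hrefl p, by omega, by omega⟩) with h | h
          · exact hpD (hCsub h.1)
          · exact h.2 rfl
      have hCsupp : ∀ v ∈ C, m - 1 ≤ Sum.elim Fin.val Fin.val v := by
        rintro v (hv | hv)
        · rcases v with i | j
          · show m - 1 ≤ i.val
            by_contra h5
            exact hnlD i (by omega) hv.1
          · have h5 : ¬ j.val < m := fun h => hv.2 ((hYr j).mpr h)
            show m - 1 ≤ j.val
            omega
        · rw [Set.mem_singleton_iff] at hv
          subst hv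
          show m - 1 ≤ p.val
          omega
      refine ⟨C, ⟨hCmin, hCsupp⟩, ?_⟩
      have hpc : Sum.inl p ∉ C := by
        rintro (h | h)
        · exact hpD h.1
        · rw [Set.mem_singleton_iff] at h
          exact absurd h (by simp)
      simp only []
      rw [if_neg hpc]
      ext w
      constructor
      · rintro (hw | hw)
        · exact hCsub hw
        · rw [hY] at hw
          obtain ⟨j, hj, rfl⟩ := hw
          exact hYD j hj
      · intro hw
        by_cases hwY : w ∈ Y
        · exact Or.inr hwY
        · exact Or.inl (Or.inl ⟨hw, hwY⟩)
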